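/- For each closed conditional expression t there exists an rp-basic form t' such that CP_rp proves t = t'. -/

import Mathlib

inductive CE (A : Type) : Type
  | tt : CE A
  | ff : CE A
  | atom : A → CE A
  | cond : CE A → CE A → CE A → CE A

inductive Deriv {A : Type} (Ax : CE A → CE A → Prop) : CE A → CE A → Prop
  | ax {t t'} : Ax t t' → Deriv Ax t t'
  | refl (t) : Deriv Ax t t
  | symm {t t'} : Deriv Ax t t' → Deriv Ax t' t
  | trans {t t' t''} : Deriv Ax t t' → Deriv Ax t' t'' → Deriv Ax t t''
  | congr {x x' y y' z z'} : Deriv Ax x x' → Deriv Ax y y' → Deriv Ax z z' →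
      Deriv Ax (.cond x y z) (.cond x' y' z')
  | cp1 (x y) : Deriv Ax (.cond x .tt y) x
  | cp2 (x y) : Deriv Ax (.cond x .ff y) y
  | cp3 (x) : Deriv Ax (.cond .tt x .ff) x
  | cp4 (x y z u v) : Deriv Ax (.cond x (.cond y z u) v) (.cond (.cond x y v) z (.cond x u v))

/-- Derivability from the CP axioms alone (no extra axioms). -/
def CP {A : Type} : CE A → CE A → Prop := Deriv (fun _ _ => False)

/-- The axiom schemes (CPrp1) and (CPrp2), for each atom a. -/
def AxRp {A : Type} : CE A → CE A → Prop := fun s t =>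
  (∃ (a : A) (x y z : CE A),
      s = .cond (.cond x (.atom a) y) (.atom a) z ∧
      t = .cond (.cond x (.atom a) x) (.atom a) z) ∨
  (∃ (a : A) (x y z : CE A),
      s = .cond x (.atom a) (.cond y (.atom a) z) ∧
      t = .cond x (.atom a) (.cond z (.atom a) z))

/-- The side condition for rp-basic forms: the central condition (if present) is
different from a, or the term has the shape t' ◁ a ▷ t'. -/
def rpOK {A : Type} (a : A) : CE A → Prop
  | .cond x (.atom b) y => b ≠ a ∨ x = y
  | _ => True

/-- rp-basic forms. -/
inductive RpBasic {A : Type} : CE A → Prop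
  | tt : RpBasic .tt
  | ff : RpBasic .ff
  | cond {t1 t2 : CE A} (a : A) : RpBasic t1 → RpBasic t2 → rpOK a t1 → rpOK a t2 →
      RpBasic (.cond t1 (.atom a) t2)

/-!
First normalize with the plain CP axioms: case distinction on a basic form `q` distributes
over `p ◁ q ▷ r` by (CP4), so every term is derivably a basic form, i.e. a decision tree
over atoms. To make a basic form rp-basic, note that in `(x ◁ a ▷ y) ◁ a ▷ z` the inner
test on `a` is decided, so by (CPrp1) `y` may be replaced by `x`, and symmetrically for
(CPrp2). Hence a branch below a test on `a` can be rewritten, by induction on the tree,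
either to the shape `t ◁ a ▷ t` or to a tree whose root tests another atom.
-/

inductive BasicForm {A : Type} : CE A → Prop
  | tt : BasicForm .tt
  | ff : BasicForm .ff
  | cond {t1 t2 : CE A} (a : A) : BasicForm t1 → BasicForm t2 →
      BasicForm (.cond t1 (.atom a) t2)

section BasicForms

variable {A : Type} {Ax : CE A → CE A → Prop}

theorem BasicForm.exists_deriv_cond {p q r : CE A} (hp : BasicForm p) (hq : BasicForm q)
    (hr : BasicForm r) : ∃ s, BasicForm s ∧ Deriv Ax (.cond p q r) s := by
  induction hq with
  | tt => exact ⟨p, hp, .cp1 p r⟩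
  | ff => exact ⟨r, hr, .cp2 p r⟩
  | cond b _ _ ih1 ih2 =>
    obtain ⟨s1, hs1, hd1⟩ := ih1
    obtain ⟨s2, hs2, hd2⟩ := ih2
    exact ⟨.cond s1 (.atom b) s2, .cond b hs1 hs2,
      (Deriv.cp4 _ _ _ _ _).trans (.congr hd1 (.refl _) hd2)⟩

theorem exists_basicForm_deriv (t : CE A) : ∃ s, BasicForm s ∧ Deriv Ax t s := by
  induction t with
  | tt => exact ⟨.tt, .tt, .refl _⟩
  | ff => exact ⟨.ff, .ff, .refl _⟩
  | atom a => exact ⟨.cond .tt (.atom a) .ff, .cond a .tt .ff, (Deriv.cp3 _).symm⟩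
  | cond t1 t2 t3 ih1 ih2 ih3 =>
    obtain ⟨s1, hs1, hd1⟩ := ih1
    obtain ⟨s2, hs2, hd2⟩ := ih2
    obtain ⟨s3, hs3, hd3⟩ := ih3
    obtain ⟨s, hs, hd⟩ := hs1.exists_deriv_cond hs2 hs3
    exact ⟨s, hs, (Deriv.congr hd1 hd2 hd3).trans hd⟩

end BasicForms

section RpBasicForms

variable {A : Type}

theorem deriv_cprp1 (a : A) (x y z : CE A) :
    Deriv AxRp (.cond (.cond x (.atom a) y) (.atom a) z)
      (.cond (.cond x (.atom a) x) (.atom a) z) :=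
  .ax (.inl ⟨a, x, y, z, rfl, rfl⟩)

theorem deriv_cprp2 (a : A) (x y z : CE A) :
    Deriv AxRp (.cond x (.atom a) (.cond y (.atom a) z))
      (.cond x (.atom a) (.cond z (.atom a) z)) :=
  .ax (.inr ⟨a, x, y, z, rfl, rfl⟩)

def LeftBranchEquiv (a : A) (p q : CE A) : Prop :=
  ∀ z, Deriv AxRp (.cond p (.atom a) z) (.cond q (.atom a) z)

def RightBranchEquiv (a : A) (p q : CE A) : Prop :=
  ∀ z, Deriv AxRp (.cond z (.atom a) p) (.cond z (.atom a) q)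

variable {a : A} {p p₁ p₂ q : CE A}

theorem leftBranchEquiv_of_deriv (h : Deriv AxRp p q) : LeftBranchEquiv a p q :=
  fun _ => .congr h (.refl _) (.refl _)

theorem rightBranchEquiv_of_deriv (h : Deriv AxRp p q) : RightBranchEquiv a p q :=
  fun _ => .congr (.refl _) (.refl _) h

theorem LeftBranchEquiv.cond_left (h : LeftBranchEquiv a p₁ q) :
    LeftBranchEquiv a (.cond p₁ (.atom a) p₂) (.cond q (.atom a) q) := fun z =>
  (deriv_cprp1 a p₁ p₂ z).trans <| (Deriv.congr (h p₁) (.refl _) (.refl _)).trans <|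
    deriv_cprp1 a q p₁ z

theorem RightBranchEquiv.cond_right (h : RightBranchEquiv a p₂ q) :
    RightBranchEquiv a (.cond p₁ (.atom a) p₂) (.cond q (.atom a) q) := fun z =>
  (deriv_cprp2 a z p₁ p₂).trans <| (Deriv.congr (.refl _) (.refl _) (h p₂)).trans <|
    deriv_cprp2 a z p₂ q

theorem exists_rpBasic_cond_of_branches {b : A}
    (hl : ∃ q, RpBasic q ∧ rpOK b q ∧ LeftBranchEquiv b p₁ q)
    (hr : ∃ q, RpBasic q ∧ rpOK b q ∧ RightBranchEquiv b p₂ q) :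
    ∃ q₁ q₂, RpBasic (.cond q₁ (.atom b) q₂) ∧
      Deriv AxRp (.cond p₁ (.atom b) p₂) (.cond q₁ (.atom b) q₂) := by
  obtain ⟨q₁, hq₁, hok₁, hl⟩ := hl
  obtain ⟨q₂, hq₂, hok₂, hr⟩ := hr
  exact ⟨q₁, q₂, .cond b hq₁ hq₂ hok₁ hok₂, (hl p₂).trans (hr q₁)⟩

theorem BasicForm.exists_rpBasic_branches (hp : BasicForm p) (a : A) :
    (∃ q, RpBasic q ∧ rpOK a q ∧ LeftBranchEquiv a p q) ∧
      (∃ q, RpBasic q ∧ rpOK a q ∧ RightBranchEquiv a p q) := by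
  induction hp generalizing a with
  | tt => exact ⟨⟨.tt, .tt, trivial, fun _ => .refl _⟩, ⟨.tt, .tt, trivial, fun _ => .refl _⟩⟩
  | ff => exact ⟨⟨.ff, .ff, trivial, fun _ => .refl _⟩, ⟨.ff, .ff, trivial, fun _ => .refl _⟩⟩
  | cond b _ _ ih₁ ih₂ =>
    by_cases hba : b = a
    · subst hba
      obtain ⟨q₁, hq₁, hok₁, hl⟩ := (ih₁ b).1
      obtain ⟨q₂, hq₂, hok₂, hr⟩ := (ih₂ b).2
      exact ⟨⟨_, .cond b hq₁ hq₁ hok₁ hok₁, .inr rfl, hl.cond_left⟩,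
        ⟨_, .cond b hq₂ hq₂ hok₂ hok₂, .inr rfl, hr.cond_right⟩⟩
    · obtain ⟨q₁, q₂, hq, hd⟩ := exists_rpBasic_cond_of_branches (ih₁ b).1 (ih₂ b).2
      exact ⟨⟨_, hq, .inl hba, leftBranchEquiv_of_deriv hd⟩,
        ⟨_, hq, .inl hba, rightBranchEquiv_of_deriv hd⟩⟩

theorem BasicForm.exists_rpBasic_deriv (hp : BasicForm p) :
    ∃ q, RpBasic q ∧ Deriv AxRp p q := by
  cases hp with
  | tt => exact ⟨.tt, .tt, .refl _⟩
  | ff => exact ⟨.ff, .ff, .refl _⟩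
  | cond b h₁ h₂ =>
    obtain ⟨_, _, hq, hd⟩ :=
      exists_rpBasic_cond_of_branches (h₁.exists_rpBasic_branches b).1
        (h₂.exists_rpBasic_branches b).2
    exact ⟨_, hq, hd⟩

end RpBasicForms

theorem exists_rp_basic_form (A : Type) (t : CE A) :
    ∃ t' : CE A, RpBasic t' ∧ Deriv AxRp t t' := by
  obtain ⟨s, hs, hts⟩ := exists_basicForm_deriv t
  obtain ⟨t', ht', hst'⟩ := hs.exists_rpBasic_deriv
  exact ⟨t', ht', hts.trans hst'⟩
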